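/- The center of the quantum Weyl algebra D_q (q a primitive p-th root of unity, p prime) is exactly the commutative polynomial subalgebra R[x^p, δ^p]: the canonical map R[x^p, δ^p] → D_q is injective with image the center Z(D_q). -/

import Mathlib

noncomputable section

/-- The quantum integer `[n] = 1 + q + ⋯ + q^(n-1)`. -/
def qint {R : Type} [CommRing R] (q : R) (n : ℕ) : R := ∑ k ∈ Finset.range n, q ^ k

/-- The defining relation `δx = q·xδ + 1` of the quantum Weyl algebra
(generator `0` is `x`, generator `1` is `δ`). -/
inductive WeylRel (R : Type) [CommRing R] (q : R) :
    FreeAlgebra R (Fin 2) → FreeAlgebra R (Fin 2) → Prop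
  | rel : WeylRel R q (FreeAlgebra.ι R 1 * FreeAlgebra.ι R 0)
      (q • (FreeAlgebra.ι R 0 * FreeAlgebra.ι R 1) + 1)

/-- The quantum Weyl algebra `D_q = R⟨x,δ⟩/(δx - qxδ - 1)`. -/
def Weyl (R : Type) [CommRing R] (q : R) := RingQuot (WeylRel R q)

instance (R : Type) [CommRing R] (q : R) : Ring (Weyl R q) :=
  inferInstanceAs (Ring (RingQuot _))

instance (R : Type) [CommRing R] (q : R) : Algebra R (Weyl R q) :=
  inferInstanceAs (Algebra R (RingQuot _))

/-- The generator `x` of the quantum Weyl algebra. -/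
def Wx (R : Type) [CommRing R] (q : R) : Weyl R q :=
  RingQuot.mkAlgHom R (WeylRel R q) (FreeAlgebra.ι R 0)

/-- The generator `δ` of the quantum Weyl algebra. -/
def Wd (R : Type) [CommRing R] (q : R) : Weyl R q :=
  RingQuot.mkAlgHom R (WeylRel R q) (FreeAlgebra.ι R 1)

/-!
The normally ordered monomials `x^i δ^j` form an `R`-basis of `D_q`: they span because of the
commutation rule `δ^j x = q^j x δ^j + [j] δ^(j-1)`, and they are independent because `D_q` acts on
`ℕ × ℕ →₀ R` by the left-regular action written in that basis, which can be built directly and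
checked against the defining relation.

If `a` is the coefficient vector of a central element, commuting with `x` and with `δ` gives
`[v+1] a(0,v+1) = 0`, `(1 - q^v) a(u,v) = [v+1] a(u+1,v+1)` and
`(1 - q^u) a(u,v) = [u+1] a(u+1,v+1)`.
Since `[n] = 0` exactly when `p ∣ n`, induction on `u` with the first two shows `a(u,v) = 0` unless
`p ∣ v`; eliminating `a(u+1,v+1)` between the last two (after multiplying by `q - 1`) shows
`(q^u - q^v) a(u,v) = 0`, so also `p ∣ u` on the support. Conversely `x^p` and `δ^p` are central
because `q^p = 1` and `[p] = 0`.
-/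

theorem Finsupp.existsUnique_eq_mapDomain {α β M : Type*} [AddCommMonoid M] {f : α → β}
    (hf : Function.Injective f) {l : β →₀ M} (hl : ∀ b ∉ Set.range f, l b = 0) :
    ∃! a : α →₀ M, l = Finsupp.mapDomain f a := by
  have hsupp : ↑l.support ⊆ Set.range f := fun b hb =>
    not_not.mp fun h => Finsupp.mem_support_iff.mp hb (hl b h)
  have hl' := Finsupp.mapDomain_comapDomain f hf l hsupp
  exact ⟨_, hl'.symm, fun a ha => Finsupp.mapDomain_injective hf (ha.symm.trans hl'.symm)⟩

section QInt

variable {R : Type} [CommRing R] (q : R)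

theorem qint_zero : qint q 0 = 0 := Finset.sum_range_zero _

theorem qint_succ (n : ℕ) : qint q (n + 1) = q * qint q n + 1 := geom_sum_succ

theorem qint_succ' (n : ℕ) : qint q (n + 1) = q ^ n + qint q n := geom_sum_succ'

theorem qint_mul_sub_one (n : ℕ) : qint q n * (q - 1) = q ^ n - 1 := geom_sum_mul q n

theorem qint_eq_zero_iff [IsDomain R] {p : ℕ} {q : R} (hq : IsPrimitiveRoot q p) (hp : 1 < p)
    (n : ℕ) : qint q n = 0 ↔ p ∣ n := by
  have hq1 : q - 1 ≠ 0 := sub_ne_zero.mpr (hq.ne_one hp)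
  rw [← hq.pow_eq_one_iff_dvd, ← sub_eq_zero (a := q ^ n), ← qint_mul_sub_one, mul_eq_zero,
    or_iff_left hq1]

end QInt

namespace Weyl

open Finsupp

variable {R : Type} [CommRing R] (q : R)

-- Left and right multiplication by `x` and `δ`, on the coefficients of the monomials `x^i δ^j`.
-- The truncated `i - 1` and `j - 1` are harmless since they only occur multiplied by `[0] = 0`.
def lmulX : (ℕ × ℕ →₀ R) →ₗ[R] (ℕ × ℕ →₀ R) :=
  lmapDomain R R fun ij => (ij.1 + 1, ij.2)

def lmulD : (ℕ × ℕ →₀ R) →ₗ[R] (ℕ × ℕ →₀ R) :=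
  Finsupp.lift _ R _ fun ij =>
    q ^ ij.1 • single (ij.1, ij.2 + 1) 1 + qint q ij.1 • single (ij.1 - 1, ij.2) 1

def rmulX : (ℕ × ℕ →₀ R) →ₗ[R] (ℕ × ℕ →₀ R) :=
  Finsupp.lift _ R _ fun ij =>
    q ^ ij.2 • single (ij.1 + 1, ij.2) 1 + qint q ij.2 • single (ij.1, ij.2 - 1) 1

def rmulD : (ℕ × ℕ →₀ R) →ₗ[R] (ℕ × ℕ →₀ R) :=
  lmapDomain R R fun ij => (ij.1, ij.2 + 1)

@[simp] theorem lmulX_single (i j : ℕ) (c : R) :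
    lmulX (single (i, j) c) = single (i + 1, j) c :=
  mapDomain_single

@[simp] theorem lmulD_single (i j : ℕ) (c : R) :
    lmulD q (single (i, j) c) =
      single (i, j + 1) (q ^ i * c) + single (i - 1, j) (qint q i * c) := by
  simp [lmulD, smul_single, mul_comm]

@[simp] theorem rmulX_single (i j : ℕ) (c : R) :
    rmulX q (single (i, j) c) =
      single (i + 1, j) (q ^ j * c) + single (i, j - 1) (qint q j * c) := by
  simp [rmulX, smul_single, mul_comm]

@[simp] theorem rmulD_single (i j : ℕ) (c : R) :
    rmulD (single (i, j) c) = single (i, j + 1) c :=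
  mapDomain_single

theorem lmulD_mul_lmulX :
    (lmulD q * lmulX : Module.End R (ℕ × ℕ →₀ R)) = q • (lmulX * lmulD q) + 1 := by
  refine Finsupp.lhom_ext fun ⟨i, j⟩ c => ?_
  rcases i with _ | i
  · simp [qint_succ, qint_zero, smul_single, -single_mul]
  · simp only [Module.End.mul_apply, LinearMap.add_apply, LinearMap.smul_apply,
      Module.End.one_apply, lmulX_single, lmulD_single, map_add, smul_add, smul_single, smul_eq_mul,
      Nat.add_sub_cancel, qint_succ]
    rw [add_assoc _ (single (i + 1, j) _), ← single_add]
    congr 2 <;> ring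

theorem lmulX_apply_succ (a : ℕ × ℕ →₀ R) (u v : ℕ) : lmulX a (u + 1, v) = a (u, v) :=
  mapDomain_apply (fun _ _ h => by simpa [Prod.ext_iff] using h) a (u, v)

theorem lmulX_apply_zero (a : ℕ × ℕ →₀ R) (v : ℕ) : lmulX a (0, v) = 0 :=
  mapDomain_of_notMem_range _ _ (by simp)

theorem rmulD_apply_succ (a : ℕ × ℕ →₀ R) (u v : ℕ) : rmulD a (u, v + 1) = a (u, v) :=
  mapDomain_apply (fun _ _ h => by simpa [Prod.ext_iff] using h) a (u, v)

theorem lmulD_apply (a : ℕ × ℕ →₀ R) (u v : ℕ) :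
    lmulD q a (u, v + 1) = q ^ u * a (u, v) + qint q (u + 1) * a (u + 1, v + 1) := by
  induction a using Finsupp.induction_linear with
  | zero => simp
  | add f g hf hg => simp only [map_add, Finsupp.add_apply, hf, hg]; ring
  | single ij c =>
    obtain ⟨i, j⟩ := ij
    rcases i with _ | i <;> simp [single_apply, qint_zero] <;> split_ifs <;> aesop

theorem rmulX_apply_succ (a : ℕ × ℕ →₀ R) (u v : ℕ) :
    rmulX q a (u + 1, v) = q ^ v * a (u, v) + qint q (v + 1) * a (u + 1, v + 1) := by
  induction a using Finsupp.induction_linear with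
  | zero => simp
  | add f g hf hg => simp only [map_add, Finsupp.add_apply, hf, hg]; ring
  | single ij c =>
    obtain ⟨i, j⟩ := ij
    rcases j with _ | j <;> simp [single_apply, qint_zero] <;> split_ifs <;> aesop

theorem rmulX_apply_zero (a : ℕ × ℕ →₀ R) (v : ℕ) :
    rmulX q a (0, v) = qint q (v + 1) * a (0, v + 1) := by
  induction a using Finsupp.induction_linear with
  | zero => simp
  | add f g hf hg => simp only [map_add, Finsupp.add_apply, hf, hg]; ring
  | single ij c =>
    obtain ⟨i, j⟩ := ij
    rcases j with _ | j
    · simp [qint_zero]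
    · simp [single_apply]
      split_ifs <;> aesop

theorem Wd_mul_Wx : Wd R q * Wx R q = q • (Wx R q * Wd R q) + 1 := by
  have h := RingQuot.mkAlgHom_rel R (WeylRel.rel (R := R) (q := q))
  simp only [map_mul, map_add, map_smul, map_one] at h
  exact h

theorem Wd_mul_Wx_pow (n : ℕ) :
    Wd R q * Wx R q ^ n = q ^ n • (Wx R q ^ n * Wd R q) + qint q n • Wx R q ^ (n - 1) := by
  induction n with
  | zero => simp [qint_zero]
  | succ n ih =>
    rw [pow_succ, ← mul_assoc, ih, add_mul, smul_mul_assoc, smul_mul_assoc, mul_assoc, Wd_mul_Wx,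
      mul_add, mul_smul_comm, mul_one, ← mul_assoc, ← pow_succ, qint_succ']
    rcases n with _ | n
    · simp [qint_zero]
    · simp only [Nat.add_sub_cancel, ← pow_succ]
      module

theorem Wd_pow_mul_Wx (n : ℕ) :
    Wd R q ^ n * Wx R q = q ^ n • (Wx R q * Wd R q ^ n) + qint q n • Wd R q ^ (n - 1) := by
  induction n with
  | zero => simp [qint_zero]
  | succ n ih =>
    rw [pow_succ', mul_assoc, ih, mul_add, mul_smul_comm, mul_smul_comm, ← mul_assoc, Wd_mul_Wx,
      add_mul, one_mul, smul_mul_assoc, mul_assoc, ← pow_succ', qint_succ']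
    rcases n with _ | n
    · simp [qint_zero]
    · simp only [Nat.add_sub_cancel, ← pow_succ']
      module

def rep : Weyl R q →ₐ[R] Module.End R (ℕ × ℕ →₀ R) :=
  RingQuot.liftAlgHom R ⟨FreeAlgebra.lift R ![lmulX, lmulD q], fun {_ _} h => by
    cases h
    simpa using lmulD_mul_lmulX q⟩

@[simp] theorem rep_Wx : rep q (Wx R q) = lmulX :=
  (RingQuot.liftAlgHom_mkAlgHom_apply R _ _ _).trans (by simp)

@[simp] theorem rep_Wd : rep q (Wd R q) = lmulD q :=
  (RingQuot.liftAlgHom_mkAlgHom_apply R _ _ _).trans (by simp)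

def coeffs : Weyl R q →ₗ[R] (ℕ × ℕ →₀ R) :=
  LinearMap.applyₗ (single (0, 0) 1) ∘ₗ (rep q).toLinearMap

theorem coeffs_mul (w P : Weyl R q) : coeffs q (w * P) = rep q w (coeffs q P) := by
  simp [coeffs]

def monomial (i j : ℕ) : Weyl R q := Wx R q ^ i * Wd R q ^ j

theorem monomial_mul_Wx (i j : ℕ) :
    monomial q i j * Wx R q = q ^ j • monomial q (i + 1) j + qint q j • monomial q i (j - 1) := by
  simp only [monomial, mul_assoc, Wd_pow_mul_Wx, mul_add, mul_smul_comm, ← mul_assoc _ (Wx R q),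
    ← pow_succ]

theorem monomial_mul_Wd (i j : ℕ) : monomial q i j * Wd R q = monomial q i (j + 1) := by
  rw [monomial, monomial, mul_assoc, ← pow_succ]

theorem rep_Wx_pow_single (i u v : ℕ) (c : R) :
    rep q (Wx R q ^ i) (single (u, v) c) = single (u + i, v) c := by
  induction i with
  | zero => simp
  | succ i ih => rw [pow_succ', map_mul, Module.End.mul_apply, ih, rep_Wx, lmulX_single, add_assoc]

theorem rep_Wd_pow_single (j v : ℕ) (c : R) :
    rep q (Wd R q ^ j) (single (0, v) c) = single (0, v + j) c := by
  induction j with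
  | zero => simp
  | succ j ih =>
    rw [pow_succ', map_mul, Module.End.mul_apply, ih, rep_Wd, lmulD_single]
    simp [qint_zero, add_assoc]

@[simp] theorem coeffs_monomial (i j : ℕ) : coeffs q (monomial q i j) = single (i, j) 1 := by
  rw [coeffs, LinearMap.comp_apply, AlgHom.toLinearMap_apply, monomial, map_mul,
    LinearMap.applyₗ_apply_apply, Module.End.mul_apply, rep_Wd_pow_single, rep_Wx_pow_single]
  simp

theorem adjoin_Wx_Wd : Algebra.adjoin R {Wx R q, Wd R q} = ⊤ := by
  rw [eq_top_iff]
  rintro w -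
  obtain ⟨a, rfl⟩ := RingQuot.mkAlgHom_surjective R (WeylRel R q) w
  induction a using FreeAlgebra.induction with
  | grade0 r => rw [AlgHom.commutes]; exact Subalgebra.algebraMap_mem _ r
  | grade1 i =>
    fin_cases i
    exacts [Algebra.subset_adjoin (Or.inl rfl), Algebra.subset_adjoin (Or.inr rfl)]
  | mul a b ha hb => rw [map_mul]; exact mul_mem ha hb
  | add a b ha hb => rw [map_add]; exact add_mem ha hb

theorem span_monomial :
    Submodule.span R (Set.range fun ij : ℕ × ℕ => monomial q ij.1 ij.2) = ⊤ := by
  set S := Submodule.span R (Set.range fun ij : ℕ × ℕ => monomial q ij.1 ij.2)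
  have hmon (i j : ℕ) : monomial q i j ∈ S := Submodule.subset_span ⟨(i, j), rfl⟩
  have hstable (w : Weyl R q) : S ≤ S.comap (LinearMap.mulRight R w) := by
    have hw : w ∈ Algebra.adjoin R {Wx R q, Wd R q} := adjoin_Wx_Wd q ▸ Algebra.mem_top
    induction hw using Algebra.adjoin_induction with
    | mem g hg =>
      refine Submodule.span_le.mpr ?_
      rintro _ ⟨⟨i, j⟩, rfl⟩
      rcases hg with rfl | rfl
      · simpa [monomial_mul_Wx] using add_mem (S.smul_mem _ (hmon _ _)) (S.smul_mem _ (hmon _ _))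
      · simpa [monomial_mul_Wd] using hmon _ _
    | algebraMap r =>
      intro s hs
      simpa [← Algebra.commutes, ← Algebra.smul_def] using S.smul_mem r hs
    | add a b _ _ ha hb =>
      intro s hs
      have hsa : s * a ∈ S := ha hs
      have hsb : s * b ∈ S := hb hs
      simpa [mul_add] using add_mem hsa hsb
    | mul a b _ _ ha hb =>
      intro s hs
      simpa [mul_assoc] using hb (ha hs)
  refine eq_top_iff.mpr fun w _ => ?_
  simpa [monomial] using hstable w (hmon 0 0)

def monomialBasis : Module.Basis (ℕ × ℕ) R (Weyl R q) :=
  .ofRepr <| .ofLinearMap (coeffs q) (linearCombination R fun ij => monomial q ij.1 ij.2)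
    (lhom_ext fun ij c => by simp [smul_single])
    (LinearMap.ext_on_range (span_monomial q) fun ij => by simp)

theorem monomialBasis_apply (ij : ℕ × ℕ) : monomialBasis q ij = monomial q ij.1 ij.2 := by
  simp [monomialBasis]

theorem monomialBasis_repr (P : Weyl R q) : (monomialBasis q).repr P = coeffs q P := rfl

theorem coeffs_mul_Wx (P : Weyl R q) : coeffs q (P * Wx R q) = rmulX q (coeffs q P) := by
  have h : coeffs q ∘ₗ LinearMap.mulRight R (Wx R q) = rmulX q ∘ₗ coeffs q :=
    LinearMap.ext_on_range (span_monomial q) fun ⟨_, _⟩ => by simp [monomial_mul_Wx, smul_single]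
  exact LinearMap.congr_fun h P

theorem coeffs_mul_Wd (P : Weyl R q) : coeffs q (P * Wd R q) = rmulD (coeffs q P) := by
  have h : coeffs q ∘ₗ LinearMap.mulRight R (Wd R q) = rmulD ∘ₗ coeffs q :=
    LinearMap.ext_on_range (span_monomial q) fun ⟨_, _⟩ => by simp [monomial_mul_Wd]
  exact LinearMap.congr_fun h P

theorem lmulX_coeffs_of_mem_center {P : Weyl R q} (hP : P ∈ Subalgebra.center R (Weyl R q)) :
    lmulX (coeffs q P) = rmulX q (coeffs q P) := by
  rw [← rep_Wx, ← coeffs_mul, ← coeffs_mul_Wx, Subalgebra.mem_center_iff.mp hP]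

theorem lmulD_coeffs_of_mem_center {P : Weyl R q} (hP : P ∈ Subalgebra.center R (Weyl R q)) :
    lmulD q (coeffs q P) = rmulD (coeffs q P) := by
  rw [← rep_Wd, ← coeffs_mul, ← coeffs_mul_Wd, Subalgebra.mem_center_iff.mp hP]

theorem mem_center_of_commute {z : Weyl R q} (hx : Commute (Wx R q) z) (hd : Commute (Wd R q) z) :
    z ∈ Subalgebra.center R (Weyl R q) := by
  refine Subalgebra.mem_center_iff.mpr fun g => (Commute.symm ?_).eq
  refine Algebra.commute_of_mem_adjoin_of_forall_mem_commute (adjoin_Wx_Wd q ▸ Algebra.mem_top) ?_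
  rintro _ (rfl | rfl)
  exacts [hx.symm, hd.symm]

theorem sum_algebraMap_mul_Wx_pow_mul_Wd_pow (p : ℕ) (b : ℕ × ℕ →₀ R) :
    (b.sum fun ij c => algebraMap R (Weyl R q) c * Wx R q ^ (p * ij.1) * Wd R q ^ (p * ij.2)) =
      (monomialBasis q).repr.symm (b.mapDomain fun ij => (p * ij.1, p * ij.2)) := by
  rw [Module.Basis.repr_symm_apply, linearCombination_mapDomain, linearCombination_apply]
  refine Finsupp.sum_congr fun ij _ => ?_
  rw [Function.comp_apply, monomialBasis_apply, monomial, mul_assoc, Algebra.smul_def]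

section PrimitiveRoot

variable [IsDomain R] {p : ℕ} {q} (hq : IsPrimitiveRoot q p) (hp : 1 < p)
include hq hp

theorem Wx_pow_mem_center : Wx R q ^ p ∈ Subalgebra.center R (Weyl R q) := by
  refine mem_center_of_commute q (Commute.self_pow _ _) ?_
  rw [Commute, SemiconjBy, Wd_mul_Wx_pow, hq.pow_eq_one, one_smul, qint, hq.geom_sum_eq_zero hp,
    zero_smul, add_zero]

theorem Wd_pow_mem_center : Wd R q ^ p ∈ Subalgebra.center R (Weyl R q) := by
  refine mem_center_of_commute q ?_ (Commute.self_pow _ _)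
  rw [Commute, SemiconjBy, Wd_pow_mul_Wx, hq.pow_eq_one, one_smul, qint, hq.geom_sum_eq_zero hp,
    zero_smul, add_zero]

variable {a : ℕ × ℕ →₀ R}

theorem apply_eq_zero_of_not_dvd_snd (hX : lmulX a = rmulX q a) (u v : ℕ) (hv : ¬ p ∣ v) :
    a (u, v) = 0 := by
  have hqint {n : ℕ} (hn : ¬ p ∣ n) : qint q n ≠ 0 := (qint_eq_zero_iff hq hp n).not.mpr hn
  rcases v with _ | w
  · exact absurd (dvd_zero p) hv
  induction u generalizing w with
  | zero =>
    have h := congr($hX (0, w))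
    rw [lmulX_apply_zero, rmulX_apply_zero] at h
    exact (mul_eq_zero.mp h.symm).resolve_left (hqint hv)
  | succ u ih =>
    have h := congr($hX (u + 1, w))
    rw [lmulX_apply_succ, rmulX_apply_succ] at h
    have hw : (1 - q ^ w) * a (u, w) = 0 := by
      rcases w with _ | w
      · simp
      by_cases hpw : p ∣ w + 1
      · rw [(hq.pow_eq_one_iff_dvd _).mpr hpw, sub_self, zero_mul]
      · rw [ih w hpw, mul_zero]
    refine (mul_eq_zero.mp ?_).resolve_left (hqint hv)
    linear_combination hw - h

theorem pow_eq_pow_of_apply_ne_zero (hX : lmulX a = rmulX q a) (hD : lmulD q a = rmulD a)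
    {u v : ℕ} (huv : a (u, v) ≠ 0) : q ^ u = q ^ v := by
  have hA := congr($hX (u + 1, v))
  have hB := congr($hD (u, v + 1))
  rw [lmulX_apply_succ, rmulX_apply_succ] at hA
  rw [lmulD_apply, rmulD_apply_succ] at hB
  have key : (q ^ u - q ^ v) * (q - 1) * a (u, v) = 0 := by
    linear_combination (q - 1) * qint q (u + 1) * hA + (q - 1) * qint q (v + 1) * hB
      - (1 - q ^ v) * a (u, v) * qint_mul_sub_one q (u + 1)
      + (1 - q ^ u) * a (u, v) * qint_mul_sub_one q (v + 1)
  simpa [sub_eq_zero, hq.ne_one hp, huv] using key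

theorem apply_eq_zero_of_not_dvd (hX : lmulX a = rmulX q a) (hD : lmulD q a = rmulD a)
    (u v : ℕ) (huv : ¬ (p ∣ u ∧ p ∣ v)) : a (u, v) = 0 := by
  by_contra hne
  have hv : p ∣ v := not_not.mp fun hv => hne (apply_eq_zero_of_not_dvd_snd hq hp hX u v hv)
  refine huv ⟨(hq.pow_eq_one_iff_dvd u).mp ?_, hv⟩
  rw [pow_eq_pow_of_apply_ne_zero hq hp hX hD hne, hq.pow_eq_one_iff_dvd]
  exact hv

end PrimitiveRoot

end Weyl

theorem stmt15_general (p : ℕ) (hp : p.Prime) (R : Type) [CommRing R] [IsDomain R]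
    (q : R) (hq : IsPrimitiveRoot q p)
    (P : Weyl R q) :
    P ∈ Subalgebra.center R (Weyl R q) ↔
      ∃! a : ℕ × ℕ →₀ R,
        P = a.sum fun ij c =>
          algebraMap R (Weyl R q) c * Wx R q ^ (p * ij.1) * Wd R q ^ (p * ij.2) := by
  have hscale : Function.Injective fun ij : ℕ × ℕ => (p * ij.1, p * ij.2) := fun _ _ h => by
    simp only [Prod.mk.injEq, mul_right_inj' hp.ne_zero] at h
    exact Prod.ext h.1 h.2
  constructor
  · intro hP
    simp_rw [Weyl.sum_algebraMap_mul_Wx_pow_mul_Wd_pow, LinearEquiv.eq_symm_apply,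
      Weyl.monomialBasis_repr]
    refine Finsupp.existsUnique_eq_mapDomain hscale fun ⟨u, v⟩ huv => ?_
    refine Weyl.apply_eq_zero_of_not_dvd hq hp.one_lt (Weyl.lmulX_coeffs_of_mem_center q hP)
      (Weyl.lmulD_coeffs_of_mem_center q hP) u v ?_
    rintro ⟨⟨i, rfl⟩, ⟨j, rfl⟩⟩
    exact huv ⟨(i, j), rfl⟩
  · rintro ⟨b, rfl, -⟩
    refine sum_mem fun ij _ => mul_mem (mul_mem (Subalgebra.algebraMap_mem _ _) ?_) ?_
    · rw [pow_mul]
      exact pow_mem (Weyl.Wx_pow_mem_center hq hp.one_lt) _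
    · rw [pow_mul]
      exact pow_mem (Weyl.Wd_pow_mem_center hq hp.one_lt) _

/-- The center of `D_q` is exactly `R[x^p, δ^p]`: an element is central iff it has a
(necessarily unique) representation as a polynomial in `x^p` and `δ^p`. -/
theorem stmt15 (p : ℕ) (hp : p.Prime) (R : Type) [CommRing R] [IsDomain R] [CharZero R]
    (q : R) (hq : IsPrimitiveRoot q p) (hgen : Algebra.adjoin ℤ ({q} : Set R) = ⊤)
    (P : Weyl R q) :
    P ∈ Subalgebra.center R (Weyl R q) ↔
      ∃! a : ℕ × ℕ →₀ R,
        P = a.sum fun ij c =>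
          algebraMap R (Weyl R q) c * Wx R q ^ (p * ij.1) * Wd R q ^ (p * ij.2) :=
  stmt15_general p hp R q hq P
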